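/- With notation as above (R a commutative ring, d_1 ≥ … ≥ d_n, D = diag(t^{d_i}), K₁ = ker(GL_n(R[[t]]) → GL_n(R))), let m ≥ 1 be a positive integer and set D^m = diag(t^{m·d_1}, …, t^{m·d_n}). Then for all g_1, g_2, h_1, h_2 ∈ GL_n(R): K₁ g_1⁻¹ D h_1 K₁ = K₁ g_2⁻¹ D h_2 K₁ if and only if K₁ g_1⁻¹ D^m h_1 K₁ = K₁ g_2⁻¹ D^m h_2 K₁. In other words, the assignment g⁻¹ D h ↦ g⁻¹ D^m h gives a well-defined bijection of double coset spaces K₁\(GL_n(R) D GL_n(R) K₁)/K₁ ≅ K₁\(GL_n(R) D^m GL_n(R) K₁)/K₁. -/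

import Mathlib

/-!
A coset identity `K₁ g₁⁻¹ D h₁ K₁ = K₁ g₂⁻¹ D h₂ K₁` amounts to `D u = w D` for some
`u, w ∈ GL_n(R[[t]])` reducing to `h₂ h₁⁻¹` and `g₂ g₁⁻¹`. Entrywise this reads
`t^{d_i} u_ij = w_ij t^{d_j}`; comparing the coefficients of `t^{d_i}` and `t^{d_j}`, and
using monomials for the converse, such `u, w` exist exactly when the reductions `A, B` satisfy
`B_ij = 0` for `d_i < d_j`, `A_ij = 0` for `d_i > d_j` and `A_ij = B_ij` for `d_i = d_j`.
This condition only sees the relative order of the `d_i`, which `d ↦ m d` preserves.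
-/

open Matrix

noncomputable section

/-- The inclusion `GL_n(R[[t]]) → GL_n(R((t)))`. -/
def psUnits (R : Type*) [CommRing R] (n : ℕ) :
    GL (Fin n) (PowerSeries R) →* GL (Fin n) (LaurentSeries R) :=
  Units.map ((HahnSeries.ofPowerSeries ℤ R).mapMatrix).toMonoidHom

/-- The inclusion `GL_n(R) → GL_n(R((t)))` as constant matrices. -/
def cUnits (R : Type*) [CommRing R] (n : ℕ) :
    GL (Fin n) R →* GL (Fin n) (LaurentSeries R) :=
  Units.map (((HahnSeries.ofPowerSeries ℤ R).comp (PowerSeries.C (R := R))).mapMatrix).toMonoidHom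

/-- Reduction modulo `t` of a matrix over `R[[t]]`. -/
def redMat (R : Type*) [CommRing R] (n : ℕ) :
    Matrix (Fin n) (Fin n) (PowerSeries R) →+* Matrix (Fin n) (Fin n) R :=
  (PowerSeries.constantCoeff (R := R)).mapMatrix

open scoped PowerSeries LaurentSeries

theorem exists_ker_sandwich_iff_exists_intertwining {H Q G : Type*} [Group H] [Group Q]
    [Group G] (φ : H →* G) (ρ : H →* Q) (σ : Q →* H) (c : Q →* G)
    (hρσ : ∀ q, ρ (σ q) = q) (hφσ : ∀ q, φ (σ q) = c q) (D : G) (g₁ g₂ h₁ h₂ : Q) :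
    (∃ k₁ k₂ : H, ρ k₁ = 1 ∧ ρ k₂ = 1 ∧
      c g₂⁻¹ * D * c h₂ = φ k₁ * (c g₁⁻¹ * D * c h₁) * φ k₂) ↔
    ∃ u w : H, ρ u = h₂ * h₁⁻¹ ∧ ρ w = g₂ * g₁⁻¹ ∧ D * φ u = φ w * D := by
  simp only [← hφσ, map_inv]
  constructor
  · rintro ⟨k₁, k₂, hk₁, hk₂, heq⟩
    refine ⟨σ h₂ * k₂⁻¹ * (σ h₁)⁻¹, σ g₂ * k₁ * (σ g₁)⁻¹, ?_, ?_, ?_⟩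
    · simp [hρσ, hk₂]
    · simp [hρσ, hk₁]
    · simp only [map_mul, map_inv]
      calc D * (φ (σ h₂) * (φ k₂)⁻¹ * (φ (σ h₁))⁻¹)
          = φ (σ g₂) * ((φ (σ g₂))⁻¹ * D * φ (σ h₂)) * ((φ k₂)⁻¹ * (φ (σ h₁))⁻¹) := by
            group
        _ = φ (σ g₂) * (φ k₁ * ((φ (σ g₁))⁻¹ * D * φ (σ h₁)) * φ k₂) *
              ((φ k₂)⁻¹ * (φ (σ h₁))⁻¹) := by rw [heq]
        _ = φ (σ g₂) * φ k₁ * (φ (σ g₁))⁻¹ * D := by group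
  · rintro ⟨u, w, hu, hw, huw⟩
    refine ⟨(σ g₂)⁻¹ * w * σ g₁, (σ h₁)⁻¹ * u⁻¹ * σ h₂, ?_, ?_, ?_⟩
    · simp [hρσ, hw]
    · simp [hρσ, hu]
    · simp only [map_mul, map_inv]
      calc (φ (σ g₂))⁻¹ * D * φ (σ h₂)
          = (φ (σ g₂))⁻¹ * (D * φ u) * (φ u)⁻¹ * φ (σ h₂) := by group
        _ = (φ (σ g₂))⁻¹ * (φ w * D) * (φ u)⁻¹ * φ (σ h₂) := by rw [huw]
        _ = (φ (σ g₂))⁻¹ * φ w * φ (σ g₁) * ((φ (σ g₁))⁻¹ * D * φ (σ h₁)) *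
              ((φ (σ h₁))⁻¹ * (φ u)⁻¹ * φ (σ h₂)) := by group

/-- `B` lies in the parabolic subgroup attached to `d`, `A` in the opposite one, and the two
have the same Levi component. -/
def LeviMatched {ι α R : Type*} [LT α] [Zero R] (d : ι → α) (A B : Matrix ι ι R) : Prop :=
  ∀ i j, (d i < d j → B i j = 0) ∧ (d j < d i → A i j = 0) ∧ (d i = d j → A i j = B i j)

theorem leviMatched_comp_strictMono {ι α β R : Type*} [LinearOrder α] [LinearOrder β] [Zero R]
    {f : α → β} (hf : StrictMono f) (d : ι → α) (A B : Matrix ι ι R) :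
    LeviMatched (f ∘ d) A B ↔ LeviMatched d A B := by
  simp only [LeviMatched, Function.comp_apply, hf.lt_iff_lt, hf.injective.eq_iff]

theorem HahnSeries.ofPowerSeries_monomial {Γ R : Type*} [Semiring R] [Semiring Γ]
    [PartialOrder Γ] [IsStrictOrderedRing Γ] (k : ℕ) (r : R) :
    ofPowerSeries Γ R (PowerSeries.monomial k r) = single (k : Γ) r := by
  simp [PowerSeries.monomial_eq_C_mul_X_pow]

theorem PowerSeries.constantCoeff_monomial_of_ne_zero {R : Type*} [Semiring R] {k : ℕ}
    (hk : k ≠ 0) (r : R) :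
    PowerSeries.constantCoeff (PowerSeries.monomial k r) = 0 := by
  rw [← coeff_zero_eq_constantCoeff_apply, coeff_monomial, if_neg hk.symm]

section PowerSeries

variable {R : Type*} [CommRing R]

theorem single_mul_ofPowerSeries_monomial {a b : ℤ} (hab : a ≤ b) (r : R) :
    HahnSeries.single a 1 * (PowerSeries.monomial (b - a).toNat r : R⸨X⸩) =
      (PowerSeries.C r : R⸨X⸩) * HahnSeries.single b 1 := by
  rw [HahnSeries.ofPowerSeries_monomial, HahnSeries.ofPowerSeries_C, HahnSeries.C_apply,
    HahnSeries.single_mul_single, HahnSeries.single_mul_single, one_mul, mul_one,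
    show a + ((b - a).toNat : ℤ) = 0 + b by omega]

theorem exists_single_mul_eq_mul_single_iff (a b : ℤ) (r s : R) :
    (∃ x y : R⟦X⟧, PowerSeries.constantCoeff x = s ∧ PowerSeries.constantCoeff y = r ∧
      HahnSeries.single a 1 * (x : R⸨X⸩) = (y : R⸨X⸩) * HahnSeries.single b 1) ↔
    (a < b → s = 0) ∧ (b < a → r = 0) ∧ (a = b → r = s) := by
  constructor
  · rintro ⟨x, y, rfl, rfl, h⟩
    -- power series have no coefficients in negative degree
    have ha := congrArg (HahnSeries.coeff · a) h
    have hb := congrArg (HahnSeries.coeff · b) h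
    simp only [HahnSeries.coeff_single_mul, HahnSeries.coeff_mul_single, PowerSeries.coeff_coe,
      one_mul, mul_one, sub_self, lt_self_iff_false, if_false, Int.natAbs_zero,
      PowerSeries.coeff_zero_eq_constantCoeff] at ha hb
    refine ⟨fun hab => ?_, fun hab => ?_, fun hab => ?_⟩
    · simpa [hab] using ha
    · simpa [hab] using hb.symm
    · subst hab
      simpa using ha.symm
  · rintro ⟨hlt, hgt, heq⟩
    rcases lt_trichotomy a b with hab | rfl | hab
    · refine ⟨PowerSeries.monomial (b - a).toNat r, PowerSeries.C r, ?_, by simp,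
        single_mul_ofPowerSeries_monomial hab.le r⟩
      rw [PowerSeries.constantCoeff_monomial_of_ne_zero (by omega), hlt hab]
    · exact ⟨PowerSeries.C r, PowerSeries.C r, by simp [heq rfl], by simp, mul_comm _ _⟩
    · refine ⟨PowerSeries.C s, PowerSeries.monomial (a - b).toNat s, by simp, ?_, ?_⟩
      · rw [PowerSeries.constantCoeff_monomial_of_ne_zero (by omega), hgt hab]
      · rw [mul_comm, ← single_mul_ofPowerSeries_monomial hab.le, mul_comm]

end PowerSeries

section GeneralLinear

variable {R : Type*} [CommRing R] {n : ℕ}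

variable (R n) in
def constUnits : GL (Fin n) R →* GL (Fin n) R⟦X⟧ :=
  Units.map (PowerSeries.C (R := R)).mapMatrix.toMonoidHom

variable (R n) in
def redUnits : GL (Fin n) R⟦X⟧ →* GL (Fin n) R :=
  Units.map (redMat R n).toMonoidHom

theorem redUnits_constUnits (g : GL (Fin n) R) : redUnits R n (constUnits R n g) = g := by
  ext i j
  simp [redUnits, constUnits, redMat]

theorem psUnits_constUnits (g : GL (Fin n) R) : psUnits R n (constUnits R n g) = cUnits R n g :=
  rfl

theorem redMat_eq_one_iff (k : GL (Fin n) R⟦X⟧) :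
    redMat R n (k : Matrix (Fin n) (Fin n) R⟦X⟧) = 1 ↔ redUnits R n k = 1 := by
  rw [Units.ext_iff]
  rfl

theorem exists_ker_redUnits_sandwich_iff (D : GL (Fin n) R⸨X⸩)
    (g₁ g₂ h₁ h₂ : GL (Fin n) R) :
    (∃ k₁ k₂ : GL (Fin n) R⟦X⟧,
      redMat R n (k₁ : Matrix (Fin n) (Fin n) R⟦X⟧) = 1 ∧
      redMat R n (k₂ : Matrix (Fin n) (Fin n) R⟦X⟧) = 1 ∧
      cUnits R n g₂⁻¹ * D * cUnits R n h₂ =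
        psUnits R n k₁ * (cUnits R n g₁⁻¹ * D * cUnits R n h₁) * psUnits R n k₂) ↔
    ∃ u w : GL (Fin n) R⟦X⟧, redUnits R n u = h₂ * h₁⁻¹ ∧ redUnits R n w = g₂ * g₁⁻¹ ∧
      D * psUnits R n u = psUnits R n w * D := by
  simp only [redMat_eq_one_iff]
  exact exists_ker_sandwich_iff_exists_intertwining _ _ _ _ redUnits_constUnits
    psUnits_constUnits D g₁ g₂ h₁ h₂

theorem exists_redUnits_eq_of_redMat_eq {U : Matrix (Fin n) (Fin n) R⟦X⟧}
    {B : GL (Fin n) R} (h : redMat R n U = B) :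
    ∃ u : GL (Fin n) R⟦X⟧, (u : Matrix (Fin n) (Fin n) R⟦X⟧) = U ∧ redUnits R n u = B := by
  have hU : IsUnit U := by
    rw [Matrix.isUnit_iff_isUnit_det, PowerSeries.isUnit_iff_constantCoeff, RingHom.map_det]
    exact h ▸ (Matrix.isUnit_iff_isUnit_det _).mp B.isUnit
  exact ⟨hU.unit, hU.unit_spec, Units.ext (by simp [redUnits, h])⟩

theorem mul_psUnits_eq_psUnits_mul_iff {d : Fin n → ℤ} {D : GL (Fin n) R⸨X⸩}
    (hD : (D : Matrix (Fin n) (Fin n) R⸨X⸩) = diagonal fun i => HahnSeries.single (d i) 1)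
    (u w : GL (Fin n) R⟦X⟧) :
    D * psUnits R n u = psUnits R n w * D ↔
      ∀ i j, HahnSeries.single (d i) 1 * ((u : Matrix (Fin n) (Fin n) R⟦X⟧) i j : R⸨X⸩) =
        ((w : Matrix (Fin n) (Fin n) R⟦X⟧) i j : R⸨X⸩) * HahnSeries.single (d j) 1 := by
  rw [Units.ext_iff, Units.val_mul, Units.val_mul, hD, ← Matrix.ext_iff]
  simp only [diagonal_mul, mul_diagonal]
  rfl

theorem exists_intertwining_iff_leviMatched {d : Fin n → ℤ} {D : GL (Fin n) R⸨X⸩}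
    (hD : (D : Matrix (Fin n) (Fin n) R⸨X⸩) = diagonal fun i => HahnSeries.single (d i) 1)
    (A B : GL (Fin n) R) :
    (∃ u w : GL (Fin n) R⟦X⟧, redUnits R n u = B ∧ redUnits R n w = A ∧
      D * psUnits R n u = psUnits R n w * D) ↔
    LeviMatched d (A : Matrix (Fin n) (Fin n) R) (B : Matrix (Fin n) (Fin n) R) := by
  simp only [LeviMatched, ← exists_single_mul_eq_mul_single_iff, mul_psUnits_eq_psUnits_mul_iff hD]
  constructor
  · rintro ⟨u, w, rfl, rfl, h⟩ i j
    exact ⟨_, _, rfl, rfl, h i j⟩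
  · intro h
    choose x y hx hy hxy using h
    obtain ⟨u, rfl, hu⟩ :=
      exists_redUnits_eq_of_redMat_eq (U := .of x) (B := B) (by ext i j; exact hx i j)
    obtain ⟨w, rfl, hw⟩ :=
      exists_redUnits_eq_of_redMat_eq (U := .of y) (B := A) (by ext i j; exact hy i j)
    exact ⟨u, w, hu, hw, hxy⟩

end GeneralLinear

theorem viehmann_stmt7_general (R : Type*) [CommRing R] (n : ℕ)
    (d : Fin n → ℤ) (m : ℕ) (hm : 1 ≤ m)
    (D Dm : GL (Fin n) (LaurentSeries R))
    (hD : (D : Matrix (Fin n) (Fin n) (LaurentSeries R)) =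
      Matrix.diagonal fun i => HahnSeries.single (d i) (1 : R))
    (hDm : (Dm : Matrix (Fin n) (Fin n) (LaurentSeries R)) =
      Matrix.diagonal fun i => HahnSeries.single ((m : ℤ) * d i) (1 : R))
    (g₁ g₂ h₁ h₂ : GL (Fin n) R) :
    (∃ k₁ k₂ : GL (Fin n) (PowerSeries R),
      redMat R n (k₁ : Matrix (Fin n) (Fin n) (PowerSeries R)) = 1 ∧
      redMat R n (k₂ : Matrix (Fin n) (Fin n) (PowerSeries R)) = 1 ∧
      cUnits R n g₂⁻¹ * D * cUnits R n h₂ =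
        psUnits R n k₁ * (cUnits R n g₁⁻¹ * D * cUnits R n h₁) * psUnits R n k₂) ↔
    (∃ k₁ k₂ : GL (Fin n) (PowerSeries R),
      redMat R n (k₁ : Matrix (Fin n) (Fin n) (PowerSeries R)) = 1 ∧
      redMat R n (k₂ : Matrix (Fin n) (Fin n) (PowerSeries R)) = 1 ∧
      cUnits R n g₂⁻¹ * Dm * cUnits R n h₂ =
        psUnits R n k₁ * (cUnits R n g₁⁻¹ * Dm * cUnits R n h₁) * psUnits R n k₂) := by
  rw [exists_ker_redUnits_sandwich_iff, exists_ker_redUnits_sandwich_iff,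
    exists_intertwining_iff_leviMatched hD, exists_intertwining_iff_leviMatched hDm]
  have hm_pos : (0 : ℤ) < m := by exact_mod_cast hm
  exact (leviMatched_comp_strictMono (strictMono_mul_left_of_pos hm_pos) d _ _).symm

/-- with `D = diag(t^{d_i})` and `Dm = diag(t^{m d_i})` for `m ≥ 1`,
`K₁ g₁⁻¹ D h₁ K₁ = K₁ g₂⁻¹ D h₂ K₁` iff `K₁ g₁⁻¹ Dm h₁ K₁ = K₁ g₂⁻¹ Dm h₂ K₁`;
i.e. `g⁻¹ D h ↦ g⁻¹ Dm h` is a well-defined bijection of double coset spaces. -/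
theorem viehmann_stmt7 (R : Type*) [CommRing R] (n : ℕ) (hn : 1 ≤ n)
    (d : Fin n → ℤ) (hd : Antitone d) (m : ℕ) (hm : 1 ≤ m)
    (D Dm : GL (Fin n) (LaurentSeries R))
    (hD : (D : Matrix (Fin n) (Fin n) (LaurentSeries R)) =
      Matrix.diagonal fun i => HahnSeries.single (d i) (1 : R))
    (hDm : (Dm : Matrix (Fin n) (Fin n) (LaurentSeries R)) =
      Matrix.diagonal fun i => HahnSeries.single ((m : ℤ) * d i) (1 : R))
    (g₁ g₂ h₁ h₂ : GL (Fin n) R) :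
    (∃ k₁ k₂ : GL (Fin n) (PowerSeries R),
      redMat R n (k₁ : Matrix (Fin n) (Fin n) (PowerSeries R)) = 1 ∧
      redMat R n (k₂ : Matrix (Fin n) (Fin n) (PowerSeries R)) = 1 ∧
      cUnits R n g₂⁻¹ * D * cUnits R n h₂ =
        psUnits R n k₁ * (cUnits R n g₁⁻¹ * D * cUnits R n h₁) * psUnits R n k₂) ↔
    (∃ k₁ k₂ : GL (Fin n) (PowerSeries R),
      redMat R n (k₁ : Matrix (Fin n) (Fin n) (PowerSeries R)) = 1 ∧
      redMat R n (k₂ : Matrix (Fin n) (Fin n) (PowerSeries R)) = 1 ∧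
      cUnits R n g₂⁻¹ * Dm * cUnits R n h₂ =
        psUnits R n k₁ * (cUnits R n g₁⁻¹ * Dm * cUnits R n h₁) * psUnits R n k₂) :=
  viehmann_stmt7_general R n d m hm D Dm hD hDm g₁ g₂ h₁ h₂

end
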